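/- Let S be an irreducible norm-closed semigroup of complex n×n matrices simultaneously similar to a semigroup of partial isometries. Then σ(T) ⊆ {0} ∪ 𝕋 for all T ∈ S, the norms of nonzero elements of S are uniformly bounded above and below by positive constants, and all idempotents of S commute. -/

import Mathlib

open Matrix

/-- The operator norm of a complex matrix acting on `ℂ^n` with the standard
inner product. -/
noncomputable def opNorm {n : ℕ} (T : Matrix (Fin n) (Fin n) ℂ) : ℝ :=
  ‖Matrix.toEuclideanCLM (𝕜 := ℂ) T‖

/-- `T` is a partial isometry: both `Tᴴ * T` and `T * Tᴴ` are orthogonal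
projections. -/
def IsPartialIsometry {n : ℕ} (T : Matrix (Fin n) (Fin n) ℂ) : Prop :=
  (Tᴴ * T) * (Tᴴ * T) = Tᴴ * T ∧ (Tᴴ * T)ᴴ = Tᴴ * T ∧
  (T * Tᴴ) * (T * Tᴴ) = T * Tᴴ ∧ (T * Tᴴ)ᴴ = T * Tᴴ

/-!
The similarity `T ↦ Q T Q⁻¹` turns the semigroup into one of partial isometries, where the
three claims are C*-algebraic facts. In a C*-ring, `star x * x = 0` forces `x = 0`; this makes
an idempotent partial isometry an orthogonal projection, and makes two orthogonal projections
commute as soon as their product is a partial isometry. A nonzero partial isometry has norm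
one, so the norms in `S` are pinched between constants depending only on `‖Q‖` and `‖Q⁻¹‖`.
For the spectrum, let `A` have all its powers partial isometries and let `A x = z x`, `z ≠ 0`,
`x ≠ 0`. The kernels of the powers of `A` stabilise after the dimension `n`, so `A ^ (n + 1)`
and `A ^ (n + 2)` have the same initial projection, whence
`|z| ^ (2 (n + 1)) ‖x‖² = ‖A ^ (n + 1) x‖² = ‖A ^ (n + 2) x‖² = |z| ^ (2 (n + 2)) ‖x‖²`.
-/

open LinearMap

theorem pow_succ_mem_of_mul_mem {M : Type*} [Monoid M] {S : Set M}
    (hmul : ∀ a ∈ S, ∀ b ∈ S, a * b ∈ S) {a : M} (ha : a ∈ S) (k : ℕ) : a ^ (k + 1) ∈ S := by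
  induction k with
  | zero => simpa using ha
  | succ k ih => rw [pow_succ]; exact hmul _ ih _ ha

theorem norm_bounds_of_norm_conj_eq_one {E : Type*} [NormedRing E] (u : Eˣ) {a : E}
    (h : ‖(u : E) * a * ↑u⁻¹‖ = 1) :
    1 ≤ ‖(u : E)‖ * ‖(↑u⁻¹ : E)‖ * ‖a‖ ∧ ‖a‖ ≤ ‖(u : E)‖ * ‖(↑u⁻¹ : E)‖ := by
  constructor
  · calc 1 = ‖(u : E) * a * ↑u⁻¹‖ := h.symm
      _ ≤ ‖(u : E)‖ * ‖a‖ * ‖(↑u⁻¹ : E)‖ := norm_mul₃_le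
      _ = ‖(u : E)‖ * ‖(↑u⁻¹ : E)‖ * ‖a‖ := mul_right_comm _ _ _
  · calc ‖a‖ = ‖(↑u⁻¹ : E) * ((u : E) * a * ↑u⁻¹) * u‖ := by simp [mul_assoc]
      _ ≤ ‖(↑u⁻¹ : E)‖ * ‖(u : E) * a * ↑u⁻¹‖ * ‖(u : E)‖ := norm_mul₃_le
      _ = ‖(u : E)‖ * ‖(↑u⁻¹ : E)‖ := by rw [h, mul_one, mul_comm]

section CStarRing

variable {E : Type*} [NonUnitalNormedRing E] [StarRing E] [CStarRing E]

theorem IsStarProjection.of_isIdempotentElem {e : E} (he : IsIdempotentElem e)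
    (h : IsStarProjection (star e * e)) : IsStarProjection e := by
  have key : star (e - star e * e) * (e - star e * e) = 0 := by
    have hstar : star e * star e = star e := by rw [← star_mul, he.eq]
    rw [star_sub, h.isSelfAdjoint.star_eq, sub_mul, mul_sub, mul_sub, ← mul_assoc, hstar,
      mul_assoc, he.eq, h.isIdempotentElem.eq]
    abel
  have he' : e = star e * e := sub_eq_zero.mp ((CStarRing.star_mul_self_eq_zero_iff _).mp key)
  exact ⟨he, by rw [he']; exact h.isSelfAdjoint⟩

theorem IsStarProjection.commute_of_star_mul_self {p q : E} (hp : IsStarProjection p)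
    (hq : IsStarProjection q) (h : IsStarProjection (star (p * q) * (p * q))) :
    Commute p q := by
  have hpq : star (p * q) = q * p := by
    rw [star_mul, hp.isSelfAdjoint.star_eq, hq.isSelfAdjoint.star_eq]
  have pp (x : E) : x * p * p = x * p := by rw [mul_assoc, hp.isIdempotentElem.eq]
  have qq (x : E) : x * q * q = x * q := by rw [mul_assoc, hq.isIdempotentElem.eq]
  have hqpq : q * p * q * p * q = q * p * q := by
    have := h.isIdempotentElem.eq
    rw [hpq] at this
    simp only [← mul_assoc, pp] at this
    rwa [qq] at this
  have key : star (p * q - q * p * q) * (p * q - q * p * q) = 0 := by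
    simp only [star_sub, hpq, star_mul, hp.isSelfAdjoint.star_eq, hq.isSelfAdjoint.star_eq,
      sub_mul, mul_sub, ← mul_assoc, pp, qq, hqpq]
    abel
  have h' : p * q = q * p * q := sub_eq_zero.mp ((CStarRing.star_mul_self_eq_zero_iff _).mp key)
  calc p * q = q * p * q := h'
    _ = star (q * p * q) := by
      rw [star_mul, star_mul, hp.isSelfAdjoint.star_eq, hq.isSelfAdjoint.star_eq, mul_assoc]
    _ = q * p := by rw [← h', hpq]

theorem IsStarProjection.norm_eq_one {p : E} (hp : IsStarProjection p) (h0 : p ≠ 0) :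
    ‖p‖ = 1 := by
  have : ‖p‖ * ‖p‖ = ‖p‖ := by
    rw [← CStarRing.norm_star_mul_self, hp.isSelfAdjoint.star_eq, hp.isIdempotentElem.eq]
  exact (mul_eq_right₀ (norm_ne_zero_iff.mpr h0)).mp this

theorem norm_eq_one_of_isStarProjection_star_mul_self {a : E}
    (h : IsStarProjection (star a * a)) (ha : a ≠ 0) : ‖a‖ = 1 := by
  have h1 := h.norm_eq_one (by rwa [Ne, CStarRing.star_mul_self_eq_zero_iff])
  rw [CStarRing.norm_star_mul_self, ← sq] at h1
  exact (pow_eq_one_iff_of_nonneg (norm_nonneg a) two_ne_zero).mp h1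

end CStarRing

theorem Module.End.mul_eq_left_of_ker_le {R M : Type*} [Ring R] [AddCommGroup M] [Module R M]
    {p f : Module.End R M} (hp : IsIdempotentElem p) (h : ker p ≤ ker f) : f * p = f := by
  ext x
  have hx : x - p x ∈ ker p := by
    rw [mem_ker, map_sub, ← Module.End.mul_apply, hp.eq, sub_self]
  have hfx := h hx
  rw [mem_ker, map_sub, sub_eq_zero] at hfx
  exact hfx.symm

theorem IsStarProjection.eq_of_ker_toLin'_eq {m R : Type*} [Fintype m] [DecidableEq m]
    [CommRing R] [StarRing R] {P Q : Matrix m m R} (hP : IsStarProjection P)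
    (hQ : IsStarProjection Q) (h : ker (toLin' P) = ker (toLin' Q)) : P = Q := by
  have hle {P Q : Matrix m m R} (hQ : IsIdempotentElem Q) (h : ker (toLin' Q) ≤ ker (toLin' P)) :
      P * Q = P :=
    toLinAlgEquiv'.injective <| by
      rw [map_mul]; exact Module.End.mul_eq_left_of_ker_le (hQ.map toLinAlgEquiv') h
  calc P = P * Q := (hle hQ.isIdempotentElem h.ge).symm
    _ = star (Q * P) := by
      rw [star_mul, hP.isSelfAdjoint.star_eq, hQ.isSelfAdjoint.star_eq]
    _ = Q := by rw [hle hP.isIdempotentElem h.le, hQ.isSelfAdjoint.star_eq]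

theorem Matrix.ker_toLin'_star_mul_self {m R : Type*} [Fintype m] [DecidableEq m] [Field R]
    [PartialOrder R] [StarRing R] [StarOrderedRing R] (B : Matrix m m R) :
    ker (toLin' (star B * B)) = ker (toLin' B) := by
  simp only [toLin'_apply']
  exact ker_mulVecLin_conjTranspose_mul_self B

theorem Matrix.spectrum_conj {m R : Type*} [Fintype m] [DecidableEq m] [CommRing R]
    {Q T : Matrix m m R} (hQ : IsUnit Q) : spectrum R (Q * T * Q⁻¹) = spectrum R T := by
  obtain ⟨u, rfl⟩ := hQ
  rw [← coe_units_inv]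
  exact spectrum.units_conjugate

theorem Matrix.conj_pow {m R : Type*} [Fintype m] [DecidableEq m] [CommRing R]
    {Q : Matrix m m R} (hQ : IsUnit Q) (T : Matrix m m R) (k : ℕ) :
    (Q * T * Q⁻¹) ^ k = Q * T ^ k * Q⁻¹ := by
  obtain ⟨u, rfl⟩ := hQ
  rw [← coe_units_inv]
  exact Units.conj_pow u T k

theorem Matrix.star_mulVec_dotProduct_mulVec {m R : Type*} [Fintype m] [CommRing R] [StarRing R]
    (B : Matrix m m R) (x : m → R) :
    star (B *ᵥ x) ⬝ᵥ (B *ᵥ x) = star x ⬝ᵥ ((star B * B) *ᵥ x) := by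
  rw [star_mulVec, dotProduct_mulVec, dotProduct_mulVec, vecMul_vecMul, star_eq_conjTranspose]

section PartialIsometry

open scoped Matrix.Norms.L2Operator

variable {n : ℕ}

theorem opNorm_eq_norm (T : Matrix (Fin n) (Fin n) ℂ) : opNorm T = ‖T‖ := rfl

theorem IsPartialIsometry.isStarProjection_star_mul_self {T : Matrix (Fin n) (Fin n) ℂ}
    (h : IsPartialIsometry T) : IsStarProjection (star T * T) :=
  ⟨h.1, h.2.1⟩

theorem IsPartialIsometry.norm_eq_one {T : Matrix (Fin n) (Fin n) ℂ} (h : IsPartialIsometry T)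
    (hT : T ≠ 0) : ‖T‖ = 1 :=
  norm_eq_one_of_isStarProjection_star_mul_self h.isStarProjection_star_mul_self hT

theorem exists_opNorm_bounds_of_isPartialIsometry_conj {Q : Matrix (Fin n) (Fin n) ℂ}
    (hQ : IsUnit Q) : ∃ c₁ c₂ : ℝ, 0 < c₁ ∧ 0 < c₂ ∧ ∀ T : Matrix (Fin n) (Fin n) ℂ, T ≠ 0 →
      IsPartialIsometry (Q * T * Q⁻¹) → c₁ ≤ opNorm T ∧ opNorm T ≤ c₂ := by
  obtain ⟨u, rfl⟩ := hQ
  set K := ‖(u : Matrix (Fin n) (Fin n) ℂ)‖ * ‖(↑u⁻¹ : Matrix (Fin n) (Fin n) ℂ)‖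
  refine ⟨(K + 1)⁻¹, K + 1, by positivity, by positivity, fun T hT h => ?_⟩
  rw [← coe_units_inv] at h
  have hnorm := h.norm_eq_one (by simpa [-coe_units_inv] using hT)
  obtain ⟨hlow, hup⟩ := norm_bounds_of_norm_conj_eq_one u hnorm
  rw [opNorm_eq_norm, inv_le_iff_one_le_mul₀ (by positivity)]
  constructor <;> nlinarith [norm_nonneg T]

theorem commute_of_isPartialIsometry_conj {Q P R : Matrix (Fin n) (Fin n) ℂ} (hQ : IsUnit Q)
    (hP : IsIdempotentElem P) (hR : IsIdempotentElem R) (hPQ : IsPartialIsometry (Q * P * Q⁻¹))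
    (hRQ : IsPartialIsometry (Q * R * Q⁻¹)) (hPRQ : IsPartialIsometry (Q * (P * R) * Q⁻¹)) :
    Commute P R := by
  obtain ⟨u, rfl⟩ := hQ
  let c := MulSemiringAction.toRingEquiv _ (Matrix (Fin n) (Fin n) ℂ) (ConjAct.toConjAct u)
  have hc (X : Matrix (Fin n) (Fin n) ℂ) : c X = u * X * (u : Matrix (Fin n) (Fin n) ℂ)⁻¹ := by
    rw [← coe_units_inv]; exact ConjAct.units_smul_def _ _
  rw [← hc] at hPQ hRQ hPRQ
  have hE := IsStarProjection.of_isIdempotentElem (hP.map c) hPQ.isStarProjection_star_mul_self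
  have hF := IsStarProjection.of_isIdempotentElem (hR.map c) hRQ.isStarProjection_star_mul_self
  rw [map_mul] at hPRQ
  simpa using (hE.commute_of_star_mul_self hF hPRQ.isStarProjection_star_mul_self).map c.symm

def IsPowerPartialIsometry (T : Matrix (Fin n) (Fin n) ℂ) : Prop :=
  ∀ k, IsPartialIsometry (T ^ (k + 1))

open ComplexOrder in
theorem IsPowerPartialIsometry.star_pow_mul_pow_eq {A : Matrix (Fin n) (Fin n) ℂ}
    (hA : IsPowerPartialIsometry A) :
    star (A ^ (n + 1)) * A ^ (n + 1) = star (A ^ (n + 2)) * A ^ (n + 2) := by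
  have hker : ker (toLin' (A ^ (n + 1))) = ker (toLin' (A ^ (n + 2))) := by
    rw [toLin'_pow, toLin'_pow,
      Module.End.ker_pow_eq_ker_pow_finrank_of_le (m := n + 1) (by simp),
      Module.End.ker_pow_eq_ker_pow_finrank_of_le (m := n + 2) (by simp)]
  exact (hA n).isStarProjection_star_mul_self.eq_of_ker_toLin'_eq
    (hA (n + 1)).isStarProjection_star_mul_self
    (by rw [ker_toLin'_star_mul_self, ker_toLin'_star_mul_self, hker])

open ComplexOrder in
theorem IsPowerPartialIsometry.norm_eq_one_of_mem_spectrum {A : Matrix (Fin n) (Fin n) ℂ}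
    (hA : IsPowerPartialIsometry A) {z : ℂ} (hz : z ∈ spectrum ℂ A) (hz0 : z ≠ 0) :
    ‖z‖ = 1 := by
  rw [← Matrix.spectrum_toLin', ← Module.End.hasEigenvalue_iff_mem_spectrum] at hz
  obtain ⟨x, hx⟩ := hz.exists_hasEigenvector
  have hpow (k : ℕ) :
      star (A ^ k *ᵥ x) ⬝ᵥ (A ^ k *ᵥ x) = (star z * z) ^ k * (star x ⬝ᵥ x) := by
    rw [← toLin'_apply, toLin'_pow, hx.pow_apply, star_smul, smul_dotProduct, dotProduct_smul,
      smul_eq_mul, smul_eq_mul, star_pow, mul_pow, mul_assoc]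
  have hw : (star z * z) ^ (n + 1) * (star x ⬝ᵥ x) * 1
      = (star z * z) ^ (n + 1) * (star x ⬝ᵥ x) * (star z * z) := by
    rw [mul_one, mul_right_comm, ← pow_succ, ← hpow, ← hpow, star_mulVec_dotProduct_mulVec,
      star_mulVec_dotProduct_mulVec, hA.star_pow_mul_pow_eq]
  have hne : (star z * z) ^ (n + 1) * (star x ⬝ᵥ x) ≠ 0 :=
    mul_ne_zero (pow_ne_zero _ (mul_ne_zero (star_ne_zero.mpr hz0) hz0))
      (mt dotProduct_star_self_eq_zero.mp hx.2)
  have h1 : ((‖z‖ ^ 2 : ℝ) : ℂ) = 1 := by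
    rw [Complex.ofReal_pow, ← Complex.conj_mul', ← Complex.star_def]
    exact (mul_left_cancel₀ hne hw).symm
  exact (pow_eq_one_iff_of_nonneg (norm_nonneg z) two_ne_zero).mp (by exact_mod_cast h1)

theorem IsPowerPartialIsometry.spectrum_subset {A : Matrix (Fin n) (Fin n) ℂ}
    (hA : IsPowerPartialIsometry A) : spectrum ℂ A ⊆ {0} ∪ {z : ℂ | ‖z‖ = 1} :=
  fun _ hz => or_iff_not_imp_left.mpr (hA.norm_eq_one_of_mem_spectrum hz)

end PartialIsometry

theorem stmt18_general {n : ℕ} (S : Set (Matrix (Fin n) (Fin n) ℂ))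
    (hmul : ∀ A ∈ S, ∀ B ∈ S, A * B ∈ S)
    (hsim : ∃ Q : Matrix (Fin n) (Fin n) ℂ, IsUnit Q ∧
      ∀ T ∈ S, IsPartialIsometry (Q * T * Q⁻¹)) :
    (∀ T ∈ S, spectrum ℂ T ⊆ {0} ∪ {z : ℂ | ‖z‖ = 1}) ∧
    (∃ c₁ c₂ : ℝ, 0 < c₁ ∧ 0 < c₂ ∧
      ∀ T ∈ S, T ≠ 0 → c₁ ≤ opNorm T ∧ opNorm T ≤ c₂) ∧
    (∀ P ∈ S, ∀ Q ∈ S, P * P = P → Q * Q = Q → P * Q = Q * P) := by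
  obtain ⟨Q, hQ, hS⟩ := hsim
  refine ⟨fun T hT => ?_, ?_, fun P hP R hR hPP hRR => ?_⟩
  · rw [← spectrum_conj hQ]
    refine IsPowerPartialIsometry.spectrum_subset fun k => ?_
    rw [conj_pow hQ]
    exact hS _ (pow_succ_mem_of_mul_mem hmul hT k)
  · obtain ⟨c₁, c₂, hc₁, hc₂, hc⟩ := exists_opNorm_bounds_of_isPartialIsometry_conj hQ
    exact ⟨c₁, c₂, hc₁, hc₂, fun T hT hT0 => hc T hT0 (hS T hT)⟩
  · exact commute_of_isPartialIsometry_conj hQ hPP hRR (hS P hP) (hS R hR) (hS _ (hmul P hP R hR))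

/-- (i) ⇒ (ii), (iii) of the main theorem: if an irreducible norm-closed matrix
semigroup is simultaneously similar to a semigroup of partial isometries, then
the spectrum of each element lies in `{0} ∪ 𝕋`, the norms of nonzero elements
are uniformly bounded above and below by positive constants, and all idempotents
commute. -/
theorem stmt18 {n : ℕ} (S : Set (Matrix (Fin n) (Fin n) ℂ))
    (hmul : ∀ A ∈ S, ∀ B ∈ S, A * B ∈ S)
    (hclosed : IsClosed S)
    (hirr : ∀ V : Submodule ℂ (Fin n → ℂ),
      (∀ T ∈ S, ∀ x ∈ V, T.mulVec x ∈ V) → V = ⊥ ∨ V = ⊤)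
    (hsim : ∃ Q : Matrix (Fin n) (Fin n) ℂ, IsUnit Q ∧
      ∀ T ∈ S, IsPartialIsometry (Q * T * Q⁻¹)) :
    (∀ T ∈ S, spectrum ℂ T ⊆ {0} ∪ {z : ℂ | ‖z‖ = 1}) ∧
    (∃ c₁ c₂ : ℝ, 0 < c₁ ∧ 0 < c₂ ∧
      ∀ T ∈ S, T ≠ 0 → c₁ ≤ opNorm T ∧ opNorm T ≤ c₂) ∧
    (∀ P ∈ S, ∀ Q ∈ S, P * P = P → Q * Q = Q → P * Q = Q * P) :=
  stmt18_general S hmul hsim
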